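/- With f_{ab;I}(x) := the unique function on the simplex satisfying df_{ab;I} = Σ_j (s_a^j − s_b^j + i_j) dx_j and f_{ab;I}(v_{ab;I}) = 0, where s_a^j = (a/2)x^j in dual coordinates, the normalized basis elements e_{ab;I} = e^{f_{ab;I}} e^{iI·y̌} satisfy the product rule e_{ab;I} · e_{bc;K} = e^{f_{ab;I}(v_{ac;I+K}) + f_{bc;K}(v_{ac;I+K})} · e_{ac;I+K} for all a < b < c. -/

import Mathlib

/-!
The amplitude `E_{d;I}` is a product of real powers of `(2 - Σx)/2` and of the `x_k/2`, so on the
closed simplex `E_{d₁;I} · E_{d₂;K} = E_{d₁+d₂;I+K}` (the exponents add), and the phases multiply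
likewise. Since each `Ê` is `E` divided by its value at its own maximizer, this gives
`Ê_{d₁;I}(x) Ê_{d₂;K}(x) = Ê_{d₁;I}(v) Ê_{d₂;K}(v) Ê_{d₁+d₂;I+K}(x)` at `v = v_{d₁+d₂;I+K}`.
The remaining point is that `Ê_{d₁;I}(v)` and `Ê_{d₂;K}(v)` are positive, so that the logarithms
in the statement are genuine: a coordinate of `v` vanishes only where `I` does, and `v` lies on the
face `Σx = 2` only if `|I| = d₁`, where the corresponding exponent of `E_{d₁;I}` vanishes too.
-/

/-- The unnormalized amplitude `E_{d;I}(x) = ((2−Σx)/2)^{(d−|I|)/2} ∏ (x_k/2)^{i_k/2}`. -/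
noncomputable def Efun (n : ℕ) (d : ℝ) (I : Fin n → ℕ) (x : Fin n → ℝ) : ℝ :=
  ((2 - ∑ k, x k) / 2) ^ ((d - ∑ k, (I k : ℝ)) / 2)
    * ∏ k, (x k / 2) ^ ((I k : ℝ) / 2)

/-- The maximizer `v_{d;I} = 2I/d`. -/
noncomputable def vpt (n : ℕ) (d : ℝ) (I : Fin n → ℕ) : Fin n → ℝ :=
  fun k => 2 * (I k : ℝ) / d

/-- The normalized amplitude `e^{f_{ab;I}}` with maximum 1 attained at `v_{d;I}`. -/
noncomputable def Ehat (n : ℕ) (d : ℝ) (I : Fin n → ℕ) (x : Fin n → ℝ) : ℝ :=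
  Efun n d I x / Efun n d I (vpt n d I)

/-- The normalized basis element `e_{ab;I}(x,y) = Ehat(x) · e^{i Σ i_k y_k}`. -/
noncomputable def ebase (n : ℕ) (d : ℝ) (I : Fin n → ℕ) (x y : Fin n → ℝ) : ℂ :=
  (Ehat n d I x : ℂ) * Complex.exp (Complex.I * ∑ k, (I k : ℝ) * y k)

open Finset

lemma sum_natCast_add {n : ℕ} (I K : Fin n → ℕ) :
    ∑ k, (((I + K) k : ℕ) : ℝ) = ∑ k, (I k : ℝ) + ∑ k, (K k : ℝ) := by
  simp only [Pi.add_apply, Nat.cast_add, sum_add_distrib]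

lemma sum_vpt (n : ℕ) (d : ℝ) (J : Fin n → ℕ) :
    ∑ k, vpt n d J k = 2 * (∑ k, (J k : ℝ)) / d := by
  simp only [vpt, ← mul_sum, ← sum_div]

lemma vpt_nonneg {n : ℕ} {d : ℝ} (hd : 0 ≤ d) (J : Fin n → ℕ) (k : Fin n) :
    0 ≤ vpt n d J k := by
  unfold vpt; positivity

lemma sum_vpt_le_two {n : ℕ} {d : ℝ} {J : Fin n → ℕ} (hd : 0 < d)
    (hJ : ∑ k, (J k : ℝ) ≤ d) : ∑ k, vpt n d J k ≤ 2 := by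
  rw [sum_vpt, div_le_iff₀ hd]; linarith

lemma sum_vpt_lt_two {n : ℕ} {d : ℝ} {J : Fin n → ℕ} (hd : 0 < d)
    (hJ : ∑ k, (J k : ℝ) < d) : ∑ k, vpt n d J k < 2 := by
  rw [sum_vpt, div_lt_iff₀ hd]; linarith

lemma Efun_pos {n : ℕ} {d : ℝ} {I : Fin n → ℕ} {x : Fin n → ℝ}
    (hx : ∀ k, I k ≠ 0 → 0 < x k) (hs : ∑ k, (I k : ℝ) = d ∨ ∑ k, x k < 2) :
    0 < Efun n d I x := by
  unfold Efun
  refine mul_pos ?_ (prod_pos fun k _ => ?_)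
  · rcases hs with hd | hs
    · simp [hd]
    · exact Real.rpow_pos_of_pos (by linarith) _
  · by_cases hI : I k = 0
    · simp [hI]
    · exact Real.rpow_pos_of_pos (by linarith [hx k hI]) _

lemma Efun_vpt_pos {n : ℕ} {d d' : ℝ} {I J : Fin n → ℕ} (hd' : 0 < d')
    (hIJ : ∀ k, I k ≤ J k) (h : ∑ k, (I k : ℝ) = d ∨ ∑ k, (J k : ℝ) < d') :
    0 < Efun n d I (vpt n d' J) := by
  refine Efun_pos (fun k hk => ?_) (h.imp_right (sum_vpt_lt_two hd'))
  have : (0 : ℝ) < J k := by exact_mod_cast (Nat.pos_of_ne_zero hk).trans_le (hIJ k)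
  unfold vpt; positivity

lemma Efun_vpt_self_pos {n : ℕ} {d : ℝ} {I : Fin n → ℕ} (hd : 0 < d)
    (hI : ∑ k, (I k : ℝ) ≤ d) : 0 < Efun n d I (vpt n d I) :=
  Efun_vpt_pos hd (fun _ => le_rfl) (hI.lt_or_eq.symm.imp_right id)

lemma Ehat_vpt_pos {n : ℕ} {d d' : ℝ} {I J : Fin n → ℕ} (hd : 0 < d) (hd' : 0 < d')
    (hIJ : ∀ k, I k ≤ J k) (hI : ∑ k, (I k : ℝ) ≤ d)
    (hJ : ∑ k, (I k : ℝ) < d → ∑ k, (J k : ℝ) < d') :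
    0 < Ehat n d I (vpt n d' J) :=
  div_pos (Efun_vpt_pos hd' hIJ (hI.eq_or_lt.imp_right hJ)) (Efun_vpt_self_pos hd hI)

lemma Efun_mul_Efun {n : ℕ} {d₁ d₂ : ℝ} {I K : Fin n → ℕ} {x : Fin n → ℝ}
    (hx : ∀ k, 0 ≤ x k) (hs : ∑ k, x k ≤ 2)
    (hI : ∑ k, (I k : ℝ) ≤ d₁) (hK : ∑ k, (K k : ℝ) ≤ d₂) :
    Efun n d₁ I x * Efun n d₂ K x = Efun n (d₁ + d₂) (I + K) x := by
  unfold Efun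
  rw [mul_mul_mul_comm, ← prod_mul_distrib,
    ← Real.rpow_add_of_nonneg (by linarith) (by linarith) (by linarith), sum_natCast_add]
  congr 1
  · ring_nf
  · refine prod_congr rfl fun k _ => ?_
    rw [← Real.rpow_add_of_nonneg (by linarith [hx k]) (by positivity) (by positivity)]
    simp only [Pi.add_apply, Nat.cast_add, add_div]

lemma Ehat_mul_Ehat {n : ℕ} {d₁ d₂ d : ℝ} {I K : Fin n → ℕ} {x : Fin n → ℝ}
    (hd₁₂ : d₁ + d₂ = d) (hd : 0 < d) (hI : ∑ k, (I k : ℝ) ≤ d₁) (hK : ∑ k, (K k : ℝ) ≤ d₂)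
    (hx : ∀ k, 0 ≤ x k) (hxs : ∑ k, x k ≤ 2) :
    Ehat n d₁ I x * Ehat n d₂ K x
      = Ehat n d₁ I (vpt n d (I + K)) * Ehat n d₂ K (vpt n d (I + K)) * Ehat n d (I + K) x := by
  have hIK : ∑ k, (((I + K) k : ℕ) : ℝ) ≤ d := by rw [sum_natCast_add]; linarith
  have hv := (Efun_vpt_self_pos hd hIK).ne'
  unfold Ehat
  rw [div_mul_div_comm, div_mul_div_comm, Efun_mul_Efun hx hxs hI hK,
    Efun_mul_Efun (vpt_nonneg hd.le _) (sum_vpt_le_two hd hIK) hI hK, hd₁₂]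
  field_simp

lemma ebase_mul_ebase (n : ℕ) (d₁ d₂ : ℝ) (I K : Fin n → ℕ) (x y : Fin n → ℝ) :
    ebase n d₁ I x y * ebase n d₂ K x y
      = ((Ehat n d₁ I x * Ehat n d₂ K x : ℝ) : ℂ)
        * Complex.exp (Complex.I * ∑ k, (((I + K) k : ℕ) : ℝ) * y k) := by
  unfold ebase
  rw [mul_mul_mul_comm, ← Complex.exp_add, ← mul_add, Complex.ofReal_mul]
  push_cast
  simp only [Pi.add_apply, Nat.cast_add, add_mul, sum_add_distrib]

theorem stmt_13 (n : ℕ) (a b c : ℤ) (hab : a < b) (hbc : b < c)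
    (I K : Fin n → ℕ) (hI : (∑ k, (I k : ℤ)) ≤ b - a)
    (hK : (∑ k, (K k : ℤ)) ≤ c - b) :
    ∀ x : Fin n → ℝ, (∀ k, 0 ≤ x k) → (∑ k, x k) ≤ 2 → ∀ y : Fin n → ℝ,
      ebase n ((b : ℝ) - a) I x y * ebase n ((c : ℝ) - b) K x y
        = Real.exp
            (Real.log (Ehat n ((b : ℝ) - a) I (vpt n ((c : ℝ) - a) (I + K)))
              + Real.log (Ehat n ((c : ℝ) - b) K (vpt n ((c : ℝ) - a) (I + K))))
          * ebase n ((c : ℝ) - a) (I + K) x y := by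
  intro x hx hxs y
  have hab' : (a : ℝ) < b := by exact_mod_cast hab
  have hbc' : (b : ℝ) < c := by exact_mod_cast hbc
  have hI' : ∑ k, (I k : ℝ) ≤ (b : ℝ) - a := by exact_mod_cast hI
  have hK' : ∑ k, (K k : ℝ) ≤ (c : ℝ) - b := by exact_mod_cast hK
  have hca : (0 : ℝ) < c - a := by linarith
  have hIv : 0 < Ehat n ((b : ℝ) - a) I (vpt n ((c : ℝ) - a) (I + K)) :=
    Ehat_vpt_pos (by linarith) hca (fun k => Nat.le_add_right _ _) hI' fun h => by
      rw [sum_natCast_add]; linarith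
  have hKv : 0 < Ehat n ((c : ℝ) - b) K (vpt n ((c : ℝ) - a) (I + K)) :=
    Ehat_vpt_pos (by linarith) hca (fun k => Nat.le_add_left _ _) hK' fun h => by
      rw [sum_natCast_add]; linarith
  rw [Real.exp_add, Real.exp_log hIv, Real.exp_log hKv, ebase_mul_ebase,
    Ehat_mul_Ehat (by ring) hca hI' hK' hx hxs, ebase]
  push_cast
  ring
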